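/- Spectral form of Proposition 2: let ρ be a 2×2 complex positive semidefinite matrix with eigenvalues s and 1−s, where 0 < s < 1; let n ≥ 1; and let σ be a complex positive semidefinite m×m matrix for some m. If the multiset of nonzero eigenvalues (roots of the characteristic polynomial, counted with multiplicity) of the n-fold Kronecker power ρ^{⊗n} equals the multiset of nonzero eigenvalues of (1/2)·(1₂ ⊗ σ), where 1₂ is the 2×2 identity, then s = 1/2. Hence n copies of a two-qubit pure state whose reduced density matrix is not maximally mixed can never have reduced spectrum of the form required for the state to factor as a maximally entangled two-qubit state in tensor with a residual pure state. -/
import Mathlib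


open Matrix Kronecker Polynomial
open scoped ComplexOrder

/-- The `n`-fold Kronecker power of a square matrix `A`, indexed by `Fin n → m`
(the entry at `(i, j)` is `∏ k, A (i k) (j k)`, which is exactly the iterated
Kronecker product `A ⊗ A ⊗ ⋯ ⊗ A` under the canonical identification of the
index types). -/
noncomputable def kronPow {m : Type*} [Fintype m] (A : Matrix m m ℂ) (n : ℕ) :
    Matrix (Fin n → m) (Fin n → m) ℂ :=
  fun i j => ∏ k, A (i k) (j k)

open Classical in
lemma kronPow_mul {m : Type*} [Fintype m] (A B : Matrix m m ℂ) (n : ℕ) :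
    kronPow (A * B) n = kronPow A n * kronPow B n := by
  funext i j
  simp only [kronPow, Matrix.mul_apply]
  rw [Finset.prod_univ_sum, Fintype.piFinset_univ]
  exact Finset.sum_congr rfl fun p _ => Finset.prod_mul_distrib

lemma kronPow_diagonal {m : Type*} [Fintype m] [DecidableEq m] (d : m → ℂ) (n : ℕ) :
    kronPow (Matrix.diagonal d) n
      = Matrix.diagonal (fun f : Fin n → m => ∏ k, d (f k)) := by
  funext i j
  by_cases h : i = j
  · subst h
    simp [kronPow, Matrix.diagonal_apply_eq]
  · obtain ⟨k, hk⟩ := Function.ne_iff.mp h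
    rw [Matrix.diagonal_apply_ne _ h]
    exact Finset.prod_eq_zero (Finset.mem_univ k) (Matrix.diagonal_apply_ne _ hk)

lemma kronPow_one {m : Type*} [Fintype m] [DecidableEq m] (n : ℕ) :
    kronPow (1 : Matrix m m ℂ) n = 1 := by
  rw [← Matrix.diagonal_one, kronPow_diagonal]
  simp

lemma charpoly_conj_aux {n R : Type*} [Fintype n] [DecidableEq n] [CommRing R]
    (U A W : Matrix n n R) (h : U * W = 1) :
    (U * A * W).charpoly = A.charpoly := by
  have h1 : (U.map C) * (W.map C) = 1 := by
    rw [← Matrix.map_mul, h, Matrix.map_one C (map_zero C) (map_one C)]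
  have key : charmatrix (U * A * W) = U.map C * charmatrix A * W.map C := by
    have hscalar : Matrix.scalar n (X : R[X]) = (X : R[X]) • (1 : Matrix n n R[X]) := by
      rw [Matrix.smul_one_eq_diagonal]
      rfl
    rw [charmatrix, charmatrix, RingHom.mapMatrix_apply, RingHom.mapMatrix_apply,
      Matrix.mul_sub, Matrix.sub_mul, hscalar]
    congr 1
    · rw [Matrix.mul_smul, Matrix.mul_one, Matrix.smul_mul, h1]
    · rw [Matrix.map_mul, Matrix.map_mul]
  rw [Matrix.charpoly, Matrix.charpoly, key, Matrix.det_mul, Matrix.det_mul,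
    mul_right_comm, ← Matrix.det_mul, h1, Matrix.det_one, one_mul]

lemma charpoly_diagonal' {n R : Type*} [Fintype n] [DecidableEq n] [CommRing R] (d : n → R) :
    (Matrix.diagonal d).charpoly = ∏ i, (X - C (d i)) := by
  have hcm : charmatrix (Matrix.diagonal d)
      = Matrix.diagonal fun i => (X : R[X]) - C (d i) := by
    apply Matrix.ext; intro i j
    by_cases h : i = j
    · subst h; simp [charmatrix_apply_eq]
    · rw [charmatrix_apply_ne _ _ _ h, Matrix.diagonal_apply_ne _ h,
        Matrix.diagonal_apply_ne _ h, map_zero, neg_zero]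
  rw [Matrix.charpoly, hcm, Matrix.det_diagonal]

lemma charpoly_blockDiagonal' {o n R : Type*} [Fintype o] [DecidableEq o] [Fintype n]
    [DecidableEq n] [CommRing R] (M : o → Matrix n n R) :
    (Matrix.blockDiagonal M).charpoly = ∏ k, (M k).charpoly := by
  have hcm : charmatrix (Matrix.blockDiagonal M)
      = Matrix.blockDiagonal (fun k => charmatrix (M k)) := by
    apply Matrix.ext; rintro ⟨i, a⟩ ⟨j, b⟩
    by_cases hab : a = b
    · subst hab
      by_cases hij : i = j
      · subst hij
        simp [charmatrix_apply_eq, Matrix.blockDiagonal_apply_eq]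
      · have h' : ((i, a) : n × o) ≠ (j, a) := by simp [hij]
        rw [charmatrix_apply_ne _ _ _ h', Matrix.blockDiagonal_apply_eq,
          Matrix.blockDiagonal_apply_eq, charmatrix_apply_ne _ _ _ hij]
    · have h' : ((i, a) : n × o) ≠ (j, b) := by simp [hab]
      rw [charmatrix_apply_ne _ _ _ h', Matrix.blockDiagonal_apply_ne _ _ _ hab,
        Matrix.blockDiagonal_apply_ne _ _ _ hab, map_zero, neg_zero]
  rw [Matrix.charpoly, hcm, Matrix.det_blockDiagonal]
  rfl

open Classical in
lemma roots_prod_X_sub_C' {ι : Type*} [Fintype ι] (c : ι → ℂ) :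
    (∏ i, (X - C (c i))).roots = Multiset.map c Finset.univ.val := by
  rw [Finset.prod_eq_multiset_prod]
  have h2 := roots_multiset_prod_X_sub_C (Multiset.map c Finset.univ.val)
  rw [Multiset.map_map] at h2
  simpa [Function.comp_def] using h2

open Classical in
/-- Spectral form of Proposition 2: if `ρ` is a `2×2` positive semidefinite matrix with
eigenvalues `s` and `1−s` (`0 < s < 1`), `n ≥ 1`, `σ` is positive semidefinite, and the
multiset of nonzero eigenvalues of `ρ^{⊗n}` equals the multiset of nonzero eigenvalues
of `(1/2)·(1₂ ⊗ σ)`, then `s = 1/2`. -/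
theorem spectral_prop2 (s : ℝ) (hs0 : 0 < s) (hs1 : s < 1)
    (ρ : Matrix (Fin 2) (Fin 2) ℂ) (hρ : ρ.PosSemidef)
    (hev : ρ.charpoly = (X - C (s : ℂ)) * (X - C (1 - (s : ℂ))))
    (n : ℕ) (hn : 1 ≤ n)
    (m : ℕ) (σ : Matrix (Fin m) (Fin m) ℂ) (hσ : σ.PosSemidef)
    (h : ((kronPow ρ n).charpoly.roots.filter (fun z => z ≠ 0)) =
         ((((1 : ℂ) / 2) • ((1 : Matrix (Fin 2) (Fin 2) ℂ) ⊗ₖ σ)).charpoly.roots.filter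
           (fun z => z ≠ 0))) :
    s = 1 / 2 := by
  by_contra hne
  have hH := hρ.1
  set U : Matrix (Fin 2) (Fin 2) ℂ :=
    (Matrix.IsHermitian.eigenvectorUnitary hH : Matrix (Fin 2) (Fin 2) ℂ) with hUdef
  set ev : Fin 2 → ℝ := hH.eigenvalues with hevdef
  have hspec : ρ = U * Matrix.diagonal (fun i => ((ev i : ℝ) : ℂ)) * star U :=
    hH.spectral_theorem
  have hUU : U * star U = 1 :=
    Matrix.mem_unitaryGroup_iff.mp (Matrix.IsHermitian.eigenvectorUnitary hH).2
  -- the eigenvalues of ρ are s and 1 - s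
  have hcp : ρ.charpoly = ∏ i, (X - C ((ev i : ℝ) : ℂ)) := by
    conv_lhs => rw [hspec]
    rw [charpoly_conj_aux _ _ _ hUU, charpoly_diagonal']
  have hist : Multiset.map (fun i => ((ev i : ℝ) : ℂ)) Finset.univ.val
      = {(s : ℂ), 1 - (s : ℂ)} := by
    have h1 := congrArg Polynomial.roots (hcp.symm.trans hev)
    rw [roots_prod_X_sub_C', Polynomial.roots_mul
        (mul_ne_zero (X_sub_C_ne_zero _) (X_sub_C_ne_zero _)),
      Polynomial.roots_X_sub_C, Polynomial.roots_X_sub_C] at h1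
    simpa using h1
  have hmem : ((ev 0 : ℝ) : ℂ) = (s : ℂ) ∨ ((ev 0 : ℝ) : ℂ) = 1 - (s : ℂ) := by
    have hmem0 : ((ev 0 : ℝ) : ℂ)
        ∈ Multiset.map (fun i => ((ev i : ℝ) : ℂ)) Finset.univ.val :=
      Multiset.mem_map_of_mem _ (Finset.mem_univ (0 : Fin 2))
    rw [hist] at hmem0
    simpa using hmem0
  have hsum : ((ev 0 : ℝ) : ℂ) + ((ev 1 : ℝ) : ℂ) = 1 := by
    have h2 := congrArg Multiset.sum hist
    have huniv : (Finset.univ.val : Multiset (Fin 2)) = {0, 1} := rfl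
    rw [huniv] at h2
    simp only [Multiset.insert_eq_cons, Multiset.map_cons, Multiset.map_singleton,
      Multiset.sum_cons, Multiset.sum_singleton] at h2
    rw [h2]; ring
  have hpair : (ev 0 = s ∧ ev 1 = 1 - s) ∨ (ev 0 = 1 - s ∧ ev 1 = s) := by
    rcases hmem with h0 | h0
    · left
      have e0 : ev 0 = s := by exact_mod_cast h0
      have e1 : ((ev 1 : ℝ) : ℂ) = 1 - (s : ℂ) := by linear_combination hsum - h0
      exact ⟨e0, by exact_mod_cast e1⟩
    · right
      have e0 : ev 0 = 1 - s := by exact_mod_cast h0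
      have e1 : ((ev 1 : ℝ) : ℂ) = (s : ℂ) := by linear_combination hsum - h0
      exact ⟨e0, by exact_mod_cast e1⟩
  have hsne : s ≠ 1 - s := fun hc => hne (by linarith)
  have fin2 : ∀ i : Fin 2, i ≠ 0 → i = 1 := by decide
  have fin2' : ∀ i : Fin 2, i ≠ 1 → i = 0 := by decide
  obtain ⟨i₀, t, u, hu0, htu, ht, hrest⟩ :
      ∃ (i₀ : Fin 2) (t u : ℝ), 0 < u ∧ u < t ∧ ev i₀ = t ∧ ∀ i, i ≠ i₀ → ev i = u := by
    rcases hpair with ⟨e0, e1⟩ | ⟨e0, e1⟩ <;> rcases lt_or_gt_of_ne hsne with hlt | hlt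
    · exact ⟨1, 1 - s, s, hs0, hlt, e1, fun i hi => (fin2' i hi) ▸ e0⟩
    · exact ⟨0, s, 1 - s, by linarith, hlt, e0, fun i hi => (fin2 i hi) ▸ e1⟩
    · exact ⟨0, 1 - s, s, hs0, hlt, e0, fun i hi => (fin2 i hi) ▸ e1⟩
    · exact ⟨1, s, 1 - s, by linarith, hlt, e1, fun i hi => (fin2' i hi) ▸ e0⟩
  have hval : ∀ i, ev i = t ∨ ev i = u := fun i => by
    by_cases hi : i = i₀
    · exact Or.inl (hi ▸ ht)
    · exact Or.inr (hrest i hi)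
  have hpos : ∀ i, 0 < ev i := fun i => by
    rcases hval i with h' | h' <;> rw [h'] <;> linarith
  have hle : ∀ i, ev i ≤ t := fun i => by
    rcases hval i with h' | h' <;> rw [h'] <;> linarith
  -- charpoly of the Kronecker power
  have hVW : kronPow U n * kronPow (star U) n = 1 := by
    rw [← kronPow_mul, hUU, kronPow_one]
  have hkroots : (kronPow ρ n).charpoly.roots
      = Multiset.map (fun f : Fin n → Fin 2 => ∏ k, ((ev (f k) : ℝ) : ℂ))
          Finset.univ.val := by
    have hkp : (kronPow ρ n).charpoly
        = ∏ f : Fin n → Fin 2, (X - C (∏ k, ((ev (f k) : ℝ) : ℂ))) := by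
      conv_lhs => rw [hspec]
      rw [kronPow_mul, kronPow_mul, kronPow_diagonal, charpoly_conj_aux _ _ _ hVW,
        charpoly_diagonal']
    rw [hkp, roots_prod_X_sub_C']
  -- count of t^n in the roots of the Kronecker power is 1
  have key : ∀ f : Fin n → Fin 2,
      (((t : ℝ) : ℂ) ^ n = ∏ k, ((ev (f k) : ℝ) : ℂ)) ↔ f = fun _ => i₀ := by
    intro f
    constructor
    · intro hf
      by_contra hfne
      obtain ⟨k₀, hk₀⟩ := Function.ne_iff.mp hfne
      have hrlt : ∏ k, ev (f k) < t ^ n := by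
        have hlt' := Finset.prod_lt_prod (f := fun k : Fin n => ev (f k))
          (g := fun _ : Fin n => t) (fun i _ => hpos (f i)) (fun i _ => hle (f i))
          ⟨k₀, Finset.mem_univ _, show ev (f k₀) < t by rw [hrest (f k₀) hk₀]; exact htu⟩
        simpa [Finset.prod_const] using hlt'
      have hr : t ^ n = ∏ k, ev (f k) := by exact_mod_cast hf
      linarith
    · rintro rfl
      simp [Finset.prod_const, ht]
  have hcount1 : Multiset.count (((t : ℝ) : ℂ) ^ n) (kronPow ρ n).charpoly.roots = 1 := by
    rw [hkroots, Multiset.count_map]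
    have hfe : Multiset.filter
        (fun f : Fin n → Fin 2 => ((t : ℝ) : ℂ) ^ n = ∏ k, ((ev (f k) : ℝ) : ℂ))
        Finset.univ.val
        = Multiset.filter (fun f : Fin n → Fin 2 => f = fun _ => i₀) Finset.univ.val :=
      Multiset.filter_congr (fun f _ => key f)
    rw [hfe, ← Finset.filter_val, Finset.filter_eq' Finset.univ (fun _ => i₀),
      if_pos (Finset.mem_univ _)]
    rfl
  have htn0 : ((t : ℝ) : ℂ) ^ n ≠ 0 :=
    pow_ne_zero _ (Complex.ofReal_ne_zero.mpr (by linarith))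
  -- the count on the right-hand side is even
  have hq : (((1 : ℂ) / 2) • ((1 : Matrix (Fin 2) (Fin 2) ℂ) ⊗ₖ σ)).charpoly
      = (((1 : ℂ) / 2) • σ).charpoly ^ 2 := by
    rw [← Matrix.kronecker_smul, Matrix.one_kronecker, Matrix.charpoly_reindex,
      charpoly_blockDiagonal']
    simp [Finset.prod_const, sq]
  have hcount2 : Multiset.count (((t : ℝ) : ℂ) ^ n)
      ((((1 : ℂ) / 2) • ((1 : Matrix (Fin 2) (Fin 2) ℂ) ⊗ₖ σ)).charpoly.roots.filter
        (fun z => z ≠ 0))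
      = 2 * Multiset.count (((t : ℝ) : ℂ) ^ n) (((1 : ℂ) / 2) • σ).charpoly.roots := by
    rw [Multiset.count_filter, if_pos htn0, hq, Polynomial.roots_pow,
      Multiset.count_nsmul]
  have hfinal := congrArg (Multiset.count (((t : ℝ) : ℂ) ^ n)) h
  rw [Multiset.count_filter, if_pos htn0, hcount1, hcount2] at hfinal
  omega
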